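/- Let C be a k-linear dg-category with two objects 1 and 2 and path algebra A = A_C with idempotents e_1, e_2. Let C^f = C ⊔_{k⊔k} k be the pushout identifying the two objects. Then the endomorphism algebra of the unique object of C^f is isomorphic to the fusion algebra A^f = ε A⁺ ε, where A⁺ = A ⊔_{ke_1⊕ke_2} M_2(k) and ε = e_{11}. -/

import Mathlib

/-!
Write `Eᵢⱼ = jM (single i j 1)` for the matrix units of `A⁺` and `ε = E₀₀`. Compressing by
`σ = E₀₀ + E₀₁` and `τ = E₀₀ + E₁₀`, `a ↦ σ · jA a · τ` is a functor out of `C` sending both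
objects to the unique object of `εA⁺ε`; the universal property of `B` turns it into
`h : B → εA⁺ε`. Conversely, the functor `uB` gives an algebra map `A → M₂(B)`,
`a ↦ (uB (eᵢ a eⱼ))ᵢⱼ`, which together with `M₂(k) → M₂(B)` induces `φ : A⁺ → M₂(B)`. The
`(0,0)` entry of `φ` is a left inverse of `h`, and `M ↦ ∑ Eᵢ₀ h(Mᵢⱼ) E₀ⱼ` is a left inverse of
`φ`: both identities hold on generators, hence everywhere by the uniqueness halves of the two
universal properties. The second one forces every element of `εA⁺ε` into the image of `h`.
-/

universe u

section

variable {k : Type u} [Field k] {A : Type u} [Ring A] [Algebra k A]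

/-- A `k`-linear functor from the two-object `k`-category `C` with path algebra `A`
(objects corresponding to idempotents `e₁, e₂`) to a one-object `k`-category with
endomorphism algebra `D`: a `k`-linear map on the path algebra sending both identities
to `1` and respecting composition. -/
def IsFunctorData (e1 e2 : A) {D : Type u} [Ring D] [Algebra k D]
    (F : A →ₗ[k] D) : Prop :=
  F e1 = 1 ∧ F e2 = 1 ∧
    (∀ a b : A, F (a * e1 * b) = F (a * e1) * F (e1 * b)) ∧
    (∀ a b : A, F (a * e2 * b) = F (a * e2) * F (e2 * b))

/-- `B`, together with `u : A → B`, is the endomorphism algebra of the unique object of the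
pushout `C^f = C ⊔_{k ⊔ k} k`: functors out of `C^f` (i.e. `k`-algebra maps out of `B`)
correspond exactly to functors out of `C`. -/
def IsFusionPushout (e1 e2 : A) (B : Type u) [Ring B] [Algebra k B]
    (u : A →ₗ[k] B) : Prop :=
  IsFunctorData e1 e2 u ∧
    ∀ (D : Type u) [Ring D] [Algebra k D] (F : A →ₗ[k] D),
      IsFunctorData e1 e2 F → ∃! h : B →ₐ[k] D, F = h.toLinearMap ∘ₗ u

end

namespace IsIdempotentElem

variable {R : Type*} [Semiring R] {e : R}

lemma mem_corner_iff_mul_mul (idem : IsIdempotentElem e) {r : R} :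
    r ∈ Subsemigroup.corner e ↔ e * r * e = r := by
  refine ⟨fun h => ?_, fun h => ⟨r, h⟩⟩
  obtain ⟨hl, hr⟩ := (Subsemigroup.mem_corner_iff idem).1 h
  rw [hl, hr]

variable {k : Type*} [CommSemiring k] [Algebra k R] (idem : IsIdempotentElem e)

instance : SMul k idem.Corner where
  smul c x := ⟨c • x.1, (mem_corner_iff_mul_mul idem).2 <| by
    rw [mul_smul_comm, smul_mul_assoc, (mem_corner_iff_mul_mul idem).1 x.2]⟩

instance : Module k idem.Corner :=
  Subtype.val_injective.module k (NonUnitalSubsemiring.corner e).subtype fun _ _ => rfl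

instance : Algebra k idem.Corner :=
  Algebra.ofModule (fun c x y => Subtype.ext (smul_mul_assoc c x.1 y.1))
    (fun c x y => Subtype.ext (mul_smul_comm c x.1 y.1))

namespace Corner

def subtype : idem.Corner →ₗ[k] R where
  toFun := Subtype.val
  map_add' _ _ := rfl
  map_smul' _ _ := rfl

@[simp] lemma subtype_apply (x : idem.Corner) : subtype (k := k) idem x = x.1 := rfl

lemma range_subtype : Set.range (subtype (k := k) idem) = {z | e * z * e = z} :=
  Set.ext fun z => ⟨fun ⟨x, hx⟩ => hx ▸ (mem_corner_iff_mul_mul idem).1 x.2,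
    fun hz => ⟨⟨z, (mem_corner_iff_mul_mul idem).2 hz⟩, rfl⟩⟩

@[simp] lemma val_zero : (0 : idem.Corner).1 = 0 := rfl

@[simp] lemma val_add (x y : idem.Corner) : (x + y).1 = x.1 + y.1 := rfl

@[simp] lemma val_sum {ι : Type*} (s : Finset ι) (f : ι → idem.Corner) :
    (∑ i ∈ s, f i).1 = ∑ i ∈ s, (f i).1 :=
  map_sum (NonUnitalSubsemiring.corner e).subtype f s

@[simp] lemma val_mul (x y : idem.Corner) : (x * y).1 = x.1 * y.1 := rfl

@[simp] lemma val_one : (1 : idem.Corner).1 = e := rfl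

@[simp] lemma val_smul (c : k) (x : idem.Corner) : (c • x).1 = c • x.1 := rfl

@[simp] lemma val_algebraMap (c : k) : (algebraMap k idem.Corner c).1 = c • e := rfl

end Corner

end IsIdempotentElem

namespace AlgHom

open Matrix

section MatrixUnits

variable {k R : Type*} [CommSemiring k] [Semiring R] [Algebra k R]
  {n : Type*} [Fintype n] [DecidableEq n] (jM : Matrix n n k →ₐ[k] R) (i₀ : n)

lemma map_single_mul_map_single (i j l m : n) :
    jM (single i j 1) * jM (single l m 1) = if j = l then jM (single i m 1) else 0 := by
  rw [← map_mul]
  split_ifs with h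
  · rw [h, single_mul_single_same, mul_one]
  · rw [single_mul_single_of_ne _ i j l h, map_zero]

lemma isIdempotentElem_map_single (i : n) : IsIdempotentElem (jM (single i i 1)) := by
  rw [IsIdempotentElem, map_single_mul_map_single, if_pos rfl]

lemma sum_map_single_self : ∑ i, jM (single i i 1) = 1 := by
  rw [← map_sum, sum_single_one, map_one]

lemma map_single_mul_map_sum_single (l : n) :
    jM (single l l 1) * jM (∑ i, single i i₀ 1) = jM (single l i₀ 1) := by
  simp [Finset.mul_sum, map_single_mul_map_single]

lemma map_sum_single_mul_map_single (l : n) :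
    jM (∑ j, single i₀ j 1) * jM (single l l 1) = jM (single i₀ l 1) := by
  simp [Finset.sum_mul, map_single_mul_map_single]

lemma map_single_mul_corner_mul_map_single (x y : (jM.isIdempotentElem_map_single i₀).Corner)
    (i j l m : n) :
    jM (single i i₀ 1) * x.1 * jM (single i₀ j 1) * (jM (single l i₀ 1) * y.1 * jM (single i₀ m 1))
      = if j = l then jM (single i i₀ 1) * (x * y).1 * jM (single i₀ m 1) else 0 := by
  have hx : x.1 * jM (single i₀ i₀ 1) = x.1 :=
    ((Subsemigroup.mem_corner_iff (jM.isIdempotentElem_map_single i₀)).1 x.2).2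
  calc _ = jM (single i i₀ 1) * x.1 * (jM (single i₀ j 1) * jM (single l i₀ 1)) * y.1
        * jM (single i₀ m 1) := by simp only [mul_assoc]
    _ = _ := by
      rw [map_single_mul_map_single]
      split_ifs
      · rw [mul_assoc _ x.1, hx, IsIdempotentElem.Corner.val_mul]
        simp only [mul_assoc]
      · simp

/-- With `Eᵢⱼ = jM (single i j 1)` and `ε = Eᵢ₀ᵢ₀`, the map `Mₙ(εRε) → R`,
`M ↦ ∑ᵢⱼ Eᵢᵢ₀ Mᵢⱼ Eᵢ₀ⱼ`. -/
def fromMatrixCorner : Matrix n n (jM.isIdempotentElem_map_single i₀).Corner →ₐ[k] R :=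
  ofLinearMap
    { toFun M := ∑ i, ∑ j, jM (single i i₀ 1) * (M i j).1 * jM (single i₀ j 1)
      map_add' M N := by simp [Finset.sum_add_distrib, add_mul, mul_add]
      map_smul' c M := by simp [Finset.smul_sum] }
    (by
      have h (i j : n) : jM (single i i₀ 1)
          * ((1 : Matrix n n (jM.isIdempotentElem_map_single i₀).Corner) i j).1
          * jM (single i₀ j 1) = if i = j then jM (single i i 1) else 0 := by
        rw [Matrix.one_apply]
        split_ifs with hij <;> simp [hij, map_single_mul_map_single]
      simp [h, sum_map_single_self])
    (fun M N => by
      simp only [LinearMap.coe_mk, AddHom.coe_mk, Matrix.mul_apply,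
        IsIdempotentElem.Corner.val_sum, Finset.mul_sum, Finset.sum_mul,
        map_single_mul_corner_mul_map_single, Finset.sum_ite_eq', Finset.mem_univ, if_true]
      rw [Finset.sum_comm]
      exact (Finset.sum_congr rfl fun _ _ => Finset.sum_comm).trans Finset.sum_comm)

lemma fromMatrixCorner_map_algebraMap (m : Matrix n n k) :
    jM.fromMatrixCorner i₀ (m.map (algebraMap k (jM.isIdempotentElem_map_single i₀).Corner))
      = jM m := by
  have h (i j : n) : m i j • (jM (single i i₀ 1) * jM (single i₀ i₀ 1) * jM (single i₀ j 1))
      = jM (single i j (m i j)) := by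
    rw [map_single_mul_map_single, if_pos rfl, map_single_mul_map_single, if_pos rfl, ← map_smul,
      smul_single, smul_eq_mul, mul_one]
  conv_rhs => rw [matrix_eq_sum_single m]
  simp [fromMatrixCorner, h]

lemma fromMatrixCorner_single_self (x : (jM.isIdempotentElem_map_single i₀).Corner) :
    jM.fromMatrixCorner i₀ (single i₀ i₀ x) = x.1 := by
  have hx := (IsIdempotentElem.mem_corner_iff_mul_mul (jM.isIdempotentElem_map_single i₀)).1 x.2
  have hv (i j : n) : (single i₀ i₀ x i j).1 = if i₀ = i ∧ i₀ = j then x.1 else 0 := by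
    rw [single_apply]
    split_ifs <;> rfl
  simp [fromMatrixCorner, hv, ite_and, hx]

/-- The compression `z ↦ σ z τ` of `R` into `εRε`, with `σ = ∑ⱼ Eᵢ₀ⱼ` and `τ = ∑ᵢ Eᵢᵢ₀`. -/
def compressToCorner : R →ₗ[k] (jM.isIdempotentElem_map_single i₀).Corner where
  toFun z := ⟨jM (∑ j, single i₀ j 1) * z * jM (∑ i, single i i₀ 1),
    (IsIdempotentElem.mem_corner_iff_mul_mul (jM.isIdempotentElem_map_single i₀)).2 <| by
      simp only [← mul_assoc, ← map_mul, Finset.mul_sum, single_mul_single_same, mul_one]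
      simp only [mul_assoc, ← map_mul, Finset.sum_mul, single_mul_single_same, mul_one]⟩
  map_add' z w := Subtype.ext <| by simp only [mul_add, add_mul]; rfl
  map_smul' c z := Subtype.ext <| by simp only [mul_smul_comm, smul_mul_assoc]; rfl

lemma val_compressToCorner_map_single_mul_mul_map_single (z : R) (i j : n) :
    (jM.compressToCorner i₀ (jM (single i i 1) * z * jM (single j j 1))).1
      = jM (single i₀ i 1) * z * jM (single j i₀ 1) := by
  change jM _ * _ * jM _ = _
  rw [← mul_assoc, ← mul_assoc, map_sum_single_mul_map_single, mul_assoc _ _ (jM _),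
    map_single_mul_map_sum_single]

lemma compressToCorner_map_single (l : n) :
    jM.compressToCorner i₀ (jM (single l l 1)) = 1 := by
  have h := val_compressToCorner_map_single_mul_mul_map_single jM i₀ 1 l l
  rw [mul_one, (isIdempotentElem_map_single jM l).eq, mul_one, map_single_mul_map_single,
    if_pos rfl] at h
  exact Subtype.ext h

lemma compressToCorner_mul_map_single_mul (z w : R) (l : n) :
    jM.compressToCorner i₀ (z * jM (single l l 1) * w)
      = jM.compressToCorner i₀ (z * jM (single l l 1))
        * jM.compressToCorner i₀ (jM (single l l 1) * w) := by
  apply Subtype.ext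
  change jM _ * _ * jM _ = jM _ * _ * jM _ * (jM _ * _ * jM _)
  have h : jM (single l l 1) * jM (∑ i, single i i₀ 1)
      * (jM (∑ j, single i₀ j 1) * jM (single l l 1)) = jM (single l l 1) := by
    rw [map_single_mul_map_sum_single, map_sum_single_mul_map_single, map_single_mul_map_single,
      if_pos rfl]
  calc _ = jM (∑ j, single i₀ j 1) * z * (jM (single l l 1) * jM (∑ i, single i i₀ 1)
        * (jM (∑ j, single i₀ j 1) * jM (single l l 1))) * w * jM (∑ i, single i i₀ 1) := by
        rw [h]
        simp only [mul_assoc]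
    _ = _ := by simp only [mul_assoc]

lemma fromMatrixCorner_compressToCorner (z : R) :
    jM.fromMatrixCorner i₀ (of fun i j =>
      jM.compressToCorner i₀ (jM (single i i 1) * z * jM (single j j 1))) = z := by
  have h (i j : n) : jM (single i i₀ 1) * (jM (single i₀ i 1) * z * jM (single j i₀ 1))
      * jM (single i₀ j 1) = jM (single i i 1) * z * jM (single j j 1) := by
    simp only [← mul_assoc, map_single_mul_map_single, if_true]
    rw [mul_assoc _ _ (jM (single i₀ j 1)), map_single_mul_map_single, if_pos rfl]
  simp only [fromMatrixCorner, ofLinearMap_apply, LinearMap.coe_mk, AddHom.coe_mk, of_apply,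
    val_compressToCorner_map_single_mul_mul_map_single, h]
  simp [← Finset.sum_mul, ← Finset.mul_sum, sum_map_single_self]

variable {B : Type*} [Semiring B] [Algebra k B]
  {φ : R →ₐ[k] Matrix n n B} (hφ : φ.comp jM = (Algebra.ofId k B).mapMatrix)
include hφ

lemma map_eq_single_of_mem_corner {z : R} (hz : z ∈ Subsemigroup.corner (jM (single i₀ i₀ 1))) :
    φ z = single i₀ i₀ (φ z i₀ i₀) := by
  have hε : φ (jM (single i₀ i₀ 1)) = single i₀ i₀ 1 := by
    rw [← comp_apply, hφ]
    simp
  conv_lhs =>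
    rw [← (IsIdempotentElem.mem_corner_iff_mul_mul (jM.isIdempotentElem_map_single i₀)).1 hz,
      map_mul, map_mul, hε]
  rw [single_mul_mul_single, one_mul, mul_one]

/-- The `(i₀, i₀)` entry of `φ` on `εRε`; it is multiplicative because `φ ε = single i₀ i₀ 1`. -/
def cornerEntry : (jM.isIdempotentElem_map_single i₀).Corner →ₐ[k] B :=
  ofLinearMap
    (entryLinearMap k B i₀ i₀ ∘ₗ φ.toLinearMap ∘ₗ IsIdempotentElem.Corner.subtype _)
    (by
      change φ (jM (single i₀ i₀ 1)) i₀ i₀ = 1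
      rw [← comp_apply, hφ]
      simp)
    (fun x y => by
      change φ (x.1 * y.1) i₀ i₀ = φ x.1 i₀ i₀ * φ y.1 i₀ i₀
      conv_lhs => rw [map_mul, map_eq_single_of_mem_corner jM i₀ hφ x.2,
        map_eq_single_of_mem_corner jM i₀ hφ y.2, single_mul_single_same, single_apply_same])

lemma cornerEntry_apply (x : (jM.isIdempotentElem_map_single i₀).Corner) :
    jM.cornerEntry i₀ hφ x = φ x.1 i₀ i₀ := rfl

lemma cornerEntry_compressToCorner (z : R) :
    jM.cornerEntry i₀ hφ (jM.compressToCorner i₀ z) = ∑ i, ∑ j, φ z i j := by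
  rw [cornerEntry_apply]
  change φ (jM _ * _ * jM _) i₀ i₀ = _
  rw [map_mul, map_mul, ← comp_apply, ← comp_apply, hφ]
  simp [Finset.sum_mul, Finset.mul_sum, Matrix.sum_apply]
  exact Finset.sum_comm

lemma fromMatrixCorner_mapMatrix_map_map (h : B →ₐ[k] (jM.isIdempotentElem_map_single i₀).Corner)
    (m : Matrix n n k) : jM.fromMatrixCorner i₀ (h.mapMatrix (φ (jM m))) = jM m := by
  rw [← comp_apply φ, hφ]
  refine .trans (congrArg _ ?_) (fromMatrixCorner_map_algebraMap jM i₀ m)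
  ext i j
  simp

theorem bijective_of_cornerEntry_comp_eq_id
    {h : B →ₐ[k] (jM.isIdempotentElem_map_single i₀).Corner}
    (hleft : (jM.cornerEntry i₀ hφ).comp h = AlgHom.id k B)
    (hright : ((jM.fromMatrixCorner i₀).comp h.mapMatrix).comp φ = AlgHom.id k R) :
    Function.Bijective h := by
  refine ⟨Function.LeftInverse.injective (g := jM.cornerEntry i₀ hφ) (AlgHom.congr_fun hleft),
    fun x => ⟨jM.cornerEntry i₀ hφ x, Subtype.ext ?_⟩⟩
  have hx := AlgHom.congr_fun hright x.1
  rwa [comp_apply, comp_apply, map_eq_single_of_mem_corner jM i₀ hφ x.2, mapMatrix_apply,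
    map_single .., fromMatrixCorner_single_self] at hx

end MatrixUnits

end AlgHom

namespace IsFunctorData

open Matrix

variable {k : Type u} [Field k] {A : Type u} [Ring A] [Algebra k A] {e1 e2 : A}
  {D : Type u} [Ring D] [Algebra k D] {F : A →ₗ[k] D}

lemma map_idempotent (hF : IsFunctorData e1 e2 F) (i : Fin 2) : F (![e1, e2] i) = 1 := by
  fin_cases i
  exacts [hF.1, hF.2.1]

lemma map_mul_idempotent_mul (hF : IsFunctorData e1 e2 F) (i : Fin 2) (a b : A) :
    F (a * ![e1, e2] i * b) = F (a * ![e1, e2] i) * F (![e1, e2] i * b) := by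
  fin_cases i
  exacts [hF.2.2.1 a b, hF.2.2.2 a b]

/-- `a ↦ (F (eᵢ a eⱼ))ᵢⱼ`: a functor out of the two-object category is an algebra map into
`2 × 2` matrices. -/
def toMatrixAlgHom (hF : IsFunctorData e1 e2 F) (he : CompleteOrthogonalIdempotents ![e1, e2]) :
    A →ₐ[k] Matrix (Fin 2) (Fin 2) D :=
  AlgHom.ofLinearMap
    { toFun a := of fun i j => F (![e1, e2] i * a * ![e1, e2] j)
      map_add' a b := by ext i j; simp [mul_add, add_mul]
      map_smul' c a := by ext i j; simp }
    (by
      ext i j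
      simp only [LinearMap.coe_mk, AddHom.coe_mk, of_apply, mul_one, he.mul_eq, Matrix.one_apply]
      split_ifs <;> simp [hF.map_idempotent])
    (fun a b => by
      ext i j
      have h : ![e1, e2] i * (a * b) * ![e1, e2] j
          = ∑ l, ![e1, e2] i * a * ![e1, e2] l * (b * ![e1, e2] j) := by
        rw [← Finset.sum_mul, ← Finset.mul_sum, he.complete]
        noncomm_ring
      simp only [LinearMap.coe_mk, AddHom.coe_mk, of_apply, Matrix.mul_apply]
      rw [h, map_sum]
      exact Finset.sum_congr rfl fun l _ => by
        rw [hF.map_mul_idempotent_mul, mul_assoc, mul_assoc])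

variable (hF : IsFunctorData e1 e2 F) (he : CompleteOrthogonalIdempotents ![e1, e2])

lemma toMatrixAlgHom_apply (a : A) (i j : Fin 2) :
    hF.toMatrixAlgHom he a i j = F (![e1, e2] i * a * ![e1, e2] j) := rfl

lemma toMatrixAlgHom_idempotent (i : Fin 2) :
    hF.toMatrixAlgHom he (![e1, e2] i) = single i i 1 := by
  ext l m
  rw [toMatrixAlgHom_apply, he.mul_eq, single_apply]
  by_cases hli : l = i
  · subst hli
    rw [if_pos rfl, he.mul_eq]
    by_cases hlm : l = m <;> simp [hlm, hF.map_idempotent]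
  · simp [hli, Ne.symm hli]

lemma sum_toMatrixAlgHom_apply (a : A) : ∑ i, ∑ j, hF.toMatrixAlgHom he a i j = F a := by
  simp only [toMatrixAlgHom_apply, ← map_sum, ← Finset.sum_mul, ← Finset.mul_sum, he.complete,
    one_mul, mul_one]

variable {R : Type u} [Ring R] [Algebra k R] {jA : A →ₐ[k] R}
  {jM : Matrix (Fin 2) (Fin 2) k →ₐ[k] R} {i₀ : Fin 2}

lemma cornerEntry_compressToCorner_map {φ : R →ₐ[k] Matrix (Fin 2) (Fin 2) D}
    (hφA : φ.comp jA = hF.toMatrixAlgHom he) (hφM : φ.comp jM = (Algebra.ofId k D).mapMatrix)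
    (a : A) : jM.cornerEntry i₀ hφM (jM.compressToCorner i₀ (jA a)) = F a := by
  rw [jM.cornerEntry_compressToCorner, ← AlgHom.comp_apply, hφA, hF.sum_toMatrixAlgHom_apply]

lemma fromMatrixCorner_mapMatrix_toMatrixAlgHom
    (hjA : ∀ i, jA (![e1, e2] i) = jM (single i i 1))
    {h : D →ₐ[k] (jM.isIdempotentElem_map_single i₀).Corner}
    (hhF : jM.compressToCorner i₀ ∘ₗ jA.toLinearMap = h.toLinearMap ∘ₗ F) (a : A) :
    jM.fromMatrixCorner i₀ (h.mapMatrix (hF.toMatrixAlgHom he a)) = jA a := by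
  have hentry : h.mapMatrix (hF.toMatrixAlgHom he a) = of fun i j =>
      jM.compressToCorner i₀ (jM (single i i 1) * jA a * jM (single j j 1)) := by
    ext i j
    rw [AlgHom.mapMatrix_apply, map_apply, toMatrixAlgHom_apply, ← AlgHom.toLinearMap_apply h,
      ← LinearMap.comp_apply, ← hhF]
    simp [hjA]
  rw [hentry, jM.fromMatrixCorner_compressToCorner]

end IsFunctorData

lemma AlgHom.isFunctorData_compressToCorner_comp {k : Type u} [Field k] {A R : Type u} [Ring A]
    [Algebra k A] [Ring R] [Algebra k R] {e1 e2 : A} (jA : A →ₐ[k] R)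
    (jM : Matrix (Fin 2) (Fin 2) k →ₐ[k] R) (i₀ : Fin 2)
    (h1 : jA e1 = jM (Matrix.single 0 0 1)) (h2 : jA e2 = jM (Matrix.single 1 1 1)) :
    IsFunctorData e1 e2 ((jM.compressToCorner i₀).comp jA.toLinearMap) := by
  refine ⟨?_, ?_, fun a b => ?_, fun a b => ?_⟩ <;>
    simp only [LinearMap.comp_apply, AlgHom.toLinearMap_apply, map_mul, h1, h2,
      compressToCorner_map_single, compressToCorner_mul_map_single_mul]

theorem fusion_pushout_is_fusion_algebra
    {k : Type u} [Field k] {A : Type u} [Ring A] [Algebra k A]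
    (e1 e2 : A)
    (h12 : e1 * e2 = 0) (h21 : e2 * e1 = 0) (hsum : e1 + e2 = 1)
    -- `B = End_{C^f}(pt)`
    (B : Type u) [Ring B] [Algebra k B] (uB : A →ₗ[k] B)
    (hB : IsFusionPushout e1 e2 B uB)
    -- `A⁺ = A ⊔_{ke₁⊕ke₂} M₂(k)`, as a pushout of `k`-algebras
    (Ap : Type u) [Ring Ap] [Algebra k Ap]
    (jA : A →ₐ[k] Ap) (jM : Matrix (Fin 2) (Fin 2) k →ₐ[k] Ap)
    (hcomp1 : jA e1 = jM (Matrix.single 0 0 1))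
    (hcomp2 : jA e2 = jM (Matrix.single 1 1 1))
    (hAp : ∀ (D : Type u) [Ring D] [Algebra k D]
        (g1 : A →ₐ[k] D) (g2 : Matrix (Fin 2) (Fin 2) k →ₐ[k] D),
      g1 e1 = g2 (Matrix.single 0 0 1) → g1 e2 = g2 (Matrix.single 1 1 1) →
      ∃! h : Ap →ₐ[k] D, h.comp jA = g1 ∧ h.comp jM = g2) :
    ∃ ψ : B →ₗ[k] Ap,
      (∀ x y : B, ψ (x * y) = ψ x * ψ y) ∧
      ψ 1 = jM (Matrix.single 0 0 1) ∧
      Function.Injective ψ ∧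
      Set.range ψ = {z : Ap |
        jM (Matrix.single 0 0 1) * z * jM (Matrix.single 0 0 1) = z} := by
  have he : CompleteOrthogonalIdempotents ![e1, e2] :=
    CompleteOrthogonalIdempotents.pair_iff'ₛ.2 ⟨h12, h21, hsum⟩
  have hjA : ∀ i : Fin 2, jA (![e1, e2] i) = jM (Matrix.single i i 1) :=
    Fin.forall_fin_two.2 ⟨hcomp1, hcomp2⟩
  obtain ⟨h, hhF, -⟩ := hB.2 _ _ (jA.isFunctorData_compressToCorner_comp jM 0 hcomp1 hcomp2)
  have hg (i : Fin 2) : hB.1.toMatrixAlgHom he (![e1, e2] i)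
      = (Algebra.ofId k B).mapMatrix (Matrix.single i i 1) := by
    simp [hB.1.toMatrixAlgHom_idempotent he]
  obtain ⟨φ, ⟨hφA, hφM⟩, -⟩ := hAp _ _ _ (hg 0) (hg 1)
  have hleft : (jM.cornerEntry 0 hφM).comp h = AlgHom.id k B :=
    (hB.2 B uB hB.1).unique (LinearMap.ext fun a =>
      ((hB.1.cornerEntry_compressToCorner_map he hφA hφM a).symm.trans
        (congrArg (jM.cornerEntry 0 hφM) (LinearMap.congr_fun hhF a)))) rfl
  have hright : ((jM.fromMatrixCorner 0).comp h.mapMatrix).comp φ = AlgHom.id k Ap :=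
    (hAp Ap jA jM hcomp1 hcomp2).unique
      ⟨AlgHom.ext fun a => by
        simpa [← hφA] using hB.1.fromMatrixCorner_mapMatrix_toMatrixAlgHom he hjA hhF a,
       AlgHom.ext fun m => jM.fromMatrixCorner_mapMatrix_map_map 0 hφM h m⟩
      ⟨rfl, rfl⟩
  have hbij := jM.bijective_of_cornerEntry_comp_eq_id 0 hφM hleft hright
  refine ⟨(IsIdempotentElem.Corner.subtype _).comp h.toLinearMap, fun x y => by simp, by simp,
    Subtype.val_injective.comp hbij.1, ?_⟩
  rw [LinearMap.coe_comp, Set.range_comp, AlgHom.coe_toLinearMap, hbij.2.range_eq, Set.image_univ,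
    IsIdempotentElem.Corner.range_subtype]
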